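/- arXiv:2102.13562 — 2 statements merged into one kernel-verified Lean document; each statement's English description precedes it below -/
import Mathlib

section
/- [Remark 5, implication (ii)] Assume there are no redundant actions for the decision-maker. Then for every a ∈ Â and every π in the intrinsic (relative) interior of BR⁻¹(a) := {π ∈ Δ(Ω) : v(a,π) = v̄(π)}, no action other than a is optimal at π, i.e., br(π) = {a}. -/
/-!
If some `b ≠ a` were also optimal at a relative interior point `π` of `BR⁻¹(a)`, the linear
function `v(a, ·) - v(b, ·)`, which is nonnegative on `BR⁻¹(a)` and vanishes at `π`, would vanish
on all of `BR⁻¹(a)` (a relative interior point can be pushed slightly past itself away from any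
other point of the set). Hence `BR⁻¹(a) ⊆ BR⁻¹(b)`. But no redundancy applied to `Â \ {a}` gives a
belief at which `a` is the only optimal action in `Â`, and `b ∈ Â` is not optimal there.
-/

open Finset

variable {Ω A : Type*}

/-- Expected payoff of mixed action `α` at belief `π` (bilinear extension of `u`). -/
noncomputable def pay [Fintype Ω] [Fintype A] (u : A → Ω → ℝ) (α : A → ℝ) (π : Ω → ℝ) : ℝ :=
  ∑ a, ∑ ω, α a * π ω * u a ω

/-- Expected payoff of pure action `a` at belief `π`. -/
noncomputable def payP [Fintype Ω] (u : A → Ω → ℝ) (a : A) (π : Ω → ℝ) : ℝ :=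
  ∑ ω, π ω * u a ω

/-- Pure best replies of the decision-maker at belief `π`. -/
def br [Fintype Ω] (v : A → Ω → ℝ) (π : Ω → ℝ) : Set A :=
  {a | ∀ a', payP v a' π ≤ payP v a π}

/-- Mixed best replies of the decision-maker at belief `π`. -/
def BR [Fintype Ω] [Fintype A] (v : A → Ω → ℝ) (π : Ω → ℝ) : Set (A → ℝ) :=
  {α ∈ stdSimplex ℝ A | ∀ α' ∈ stdSimplex ℝ A, pay v α' π ≤ pay v α π}

/-- The expert value function `ū(π) = max_{α ∈ BR(π)} u(α, π)`. -/
noncomputable def ubar [Fintype Ω] [Fintype A] (u v : A → Ω → ℝ) (π : Ω → ℝ) : ℝ :=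
  sSup ((fun α => pay u α π) '' BR v π)

/-- The decision-maker value function `v̄(π) = max_a v(a, π)`. -/
noncomputable def vbar [Fintype Ω] [Fintype A] (v : A → Ω → ℝ) (π : Ω → ℝ) : ℝ :=
  ⨆ a, payP v a π

/-- Actions that are a best reply to some belief. -/
def Ahat [Fintype Ω] [Fintype A] (v : A → Ω → ℝ) : Set A :=
  {a | ∃ π ∈ stdSimplex ℝ Ω, a ∈ br v π}

/-- Mixed actions supported on `B`. -/
def simplexOn [Fintype A] (B : Set A) : Set (A → ℝ) :=
  {α | α ∈ stdSimplex ℝ A ∧ ∀ a ∉ B, α a = 0}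

/-- `(lam, p)` is a splitting of the prior. -/
def IsSplitting [Fintype Ω] {S : Type*} [Fintype S] (lam : S → ℝ) (p : S → Ω → ℝ)
    (prior : Ω → ℝ) : Prop :=
  (∀ s, 0 < lam s) ∧ (∑ s, lam s) = 1 ∧ (∀ s, p s ∈ stdSimplex ℝ Ω) ∧
    ∀ ω, (∑ s, lam s * p s ω) = prior ω

/-- `(lam, p)` is an optimal splitting of the prior: it attains `cav ū (prior)`. -/
def IsOptimalSplitting [Fintype Ω] [Fintype A] (u v : A → Ω → ℝ) {S : Type*} [Fintype S]
    (lam : S → ℝ) (p : S → Ω → ℝ) (prior : Ω → ℝ) : Prop :=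
  IsSplitting lam p prior ∧
    ∀ (T : Type) [Fintype T] [Nonempty T] (mu : T → ℝ) (q : T → Ω → ℝ),
      IsSplitting mu q prior →
        (∑ t, mu t * ubar u v (q t)) ≤ ∑ s, lam s * ubar u v (p s)

/-- Beliefs at which `a` is optimal for the decision-maker. -/
def BRinv [Fintype Ω] [Fintype A] (v : A → Ω → ℝ) (a : A) : Set (Ω → ℝ) :=
  {π ∈ stdSimplex ℝ Ω | payP v a π = vbar v π}

/-- No redundant actions for the decision-maker. -/
def NoRedundantDM [Fintype Ω] [Fintype A] (v : A → Ω → ℝ) : Prop :=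
  ∀ B : Set A, B.Nonempty → B ⊂ Ahat v →
    ∃ π ∈ stdSimplex ℝ Ω, ∀ a ∈ B, payP v a π < vbar v π

/-- No redundant actions for the experts. -/
def NoRedundantExperts [Fintype Ω] (u : A → Ω → ℝ) : Prop :=
  ∀ a a' : A, a ≠ a' → ∃ ω, u a ω ≠ u a' ω

/-- The expert value function `ū` is concave on the simplex. -/
def UbarConcave [Fintype Ω] [Fintype A] (u v : A → Ω → ℝ) : Prop :=
  ∀ π ∈ stdSimplex ℝ Ω, ∀ π' ∈ stdSimplex ℝ Ω, ∀ t ∈ Set.Icc (0 : ℝ) 1,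
    t * ubar u v π + (1 - t) * ubar u v π' ≤ ubar u v (fun ω => t * π ω + (1 - t) * π' ω)

theorem exists_pos_add_smul_sub_mem_of_mem_intrinsicInterior {E : Type*} [AddCommGroup E]
    [Module ℝ E] [TopologicalSpace E] [ContinuousAdd E] [ContinuousSMul ℝ E] {C : Set E} {x y : E}
    (hx : x ∈ intrinsicInterior ℝ C) (hy : y ∈ C) :
    ∃ ε : ℝ, 0 < ε ∧ x + ε • (x - y) ∈ C := by
  obtain ⟨z, hz, rfl⟩ := mem_intrinsicInterior.1 hx
  have hline : ∀ t : ℝ, (z : E) + t • ((z : E) - y) ∈ affineSpan ℝ C := fun t => by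
    simpa [vsub_eq_sub, vadd_eq_add, add_comm] using
      (affineSpan ℝ C).smul_vsub_vadd_mem t z.2 (subset_affineSpan ℝ C hy) z.2
  let c : ℝ → affineSpan ℝ C := fun t => ⟨z + t • (z - y), hline t⟩
  have hc : Continuous c := by fun_prop
  have hc0 : c 0 = z := Subtype.ext (by simp [c])
  have hnear : ∀ᶠ t in nhds (0 : ℝ), c t ∈ ((↑) ⁻¹' C : Set (affineSpan ℝ C)) :=
    hc.continuousAt.preimage_mem_nhds (hc0 ▸ mem_interior_iff_mem_nhds.1 hz)
  obtain ⟨ε, hεC, hε⟩ :=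
    ((hnear.filter_mono nhdsWithin_le_nhds).and (self_mem_nhdsWithin (s := Set.Ioi 0))).exists
  exact ⟨ε, hε, hεC⟩

theorem LinearMap.apply_eq_zero_of_nonneg_on_of_mem_intrinsicInterior {E : Type*}
    [AddCommGroup E] [Module ℝ E] [TopologicalSpace E] [ContinuousAdd E] [ContinuousSMul ℝ E]
    {C : Set E} {x y : E} (f : E →ₗ[ℝ] ℝ) (hf : ∀ z ∈ C, 0 ≤ f z)
    (hx : x ∈ intrinsicInterior ℝ C) (hfx : f x = 0) (hy : y ∈ C) : f y = 0 := by
  obtain ⟨ε, hε, hmem⟩ := exists_pos_add_smul_sub_mem_of_mem_intrinsicInterior hx hy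
  have : 0 ≤ -ε * f y := by simpa [hfx] using hf _ hmem
  nlinarith [hf y hy]

section

variable [Fintype Ω]

noncomputable def payPLinear (v : A → Ω → ℝ) (a : A) : (Ω → ℝ) →ₗ[ℝ] ℝ where
  toFun := payP v a
  map_add' π ρ := by simp only [payP, Pi.add_apply, add_mul, sum_add_distrib]
  map_smul' c π := by simp only [payP, Pi.smul_apply, smul_eq_mul, mul_assoc, mul_sum,
    RingHom.id_apply]

theorem payPLinear_apply (v : A → Ω → ℝ) (a : A) (π : Ω → ℝ) : payPLinear v a π = payP v a π :=
  rfl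

variable [Fintype A]

theorem payP_le_vbar (v : A → Ω → ℝ) (a : A) (π : Ω → ℝ) : payP v a π ≤ vbar v π :=
  le_ciSup (f := fun a => payP v a π) (Set.finite_range _).bddAbove a

theorem mem_br_iff_payP_eq_vbar {v : A → Ω → ℝ} {a : A} {π : Ω → ℝ} :
    a ∈ br v π ↔ payP v a π = vbar v π := by
  have : Nonempty A := ⟨a⟩
  refine ⟨fun h => le_antisymm (payP_le_vbar v a π) (ciSup_le h), fun h a' => ?_⟩
  exact h ▸ payP_le_vbar v a' π

theorem br_nonempty [Nonempty A] (v : A → Ω → ℝ) (π : Ω → ℝ) : (br v π).Nonempty :=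
  Finite.exists_max (fun a => payP v a π)

theorem mem_BRinv_iff {v : A → Ω → ℝ} {a : A} {π : Ω → ℝ} :
    π ∈ BRinv v a ↔ π ∈ stdSimplex ℝ Ω ∧ a ∈ br v π := by
  rw [mem_br_iff_payP_eq_vbar]
  rfl

theorem BRinv_subset_BRinv_of_mem_br {v : A → Ω → ℝ} {a b : A} {π : Ω → ℝ}
    (hπ : π ∈ intrinsicInterior ℝ (BRinv v a)) (hb : b ∈ br v π) : BRinv v a ⊆ BRinv v b := by
  have ha : a ∈ br v π := (mem_BRinv_iff.1 (intrinsicInterior_subset hπ)).2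
  intro ρ hρ
  have hgap := (payPLinear v a - payPLinear v b).apply_eq_zero_of_nonneg_on_of_mem_intrinsicInterior
    (fun σ hσ => ?_) hπ ?_ hρ
  · simp only [LinearMap.sub_apply, payPLinear_apply, sub_eq_zero] at hgap
    exact ⟨hρ.1, hgap ▸ hρ.2⟩
  · simpa [payPLinear_apply, hσ.2] using payP_le_vbar v b σ
  · simp [payPLinear_apply, le_antisymm (ha b) (hb a)]

theorem NoRedundantDM.not_BRinv_subset {v : A → Ω → ℝ} (hnr : NoRedundantDM v) {a b : A}
    (ha : a ∈ Ahat v) (hb : b ∈ Ahat v) (hba : b ≠ a) : ¬ BRinv v a ⊆ BRinv v b := by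
  have : Nonempty A := ⟨a⟩
  obtain ⟨π₀, hπ₀, hlt⟩ :=
    hnr (Ahat v \ {a}) ⟨b, hb, hba⟩ ⟨Set.sdiff_subset, fun h => (h ha).2 rfl⟩
  obtain ⟨c, hc⟩ := br_nonempty v π₀
  have hca : c = a := by
    by_contra hca
    exact (hlt c ⟨⟨π₀, hπ₀, hc⟩, hca⟩).ne (mem_br_iff_payP_eq_vbar.1 hc)
  intro hsub
  exact (hlt b ⟨hb, hba⟩).ne (hsub (mem_BRinv_iff.2 ⟨hπ₀, hca ▸ hc⟩)).2

end

theorem br_singleton_on_relint_general {Ω A : Type*} [Fintype Ω] [Fintype A]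
    (v : A → Ω → ℝ) (hnr : NoRedundantDM v) :
    ∀ a ∈ Ahat v, ∀ π ∈ intrinsicInterior ℝ (BRinv v a), br v π = {a} := by
  intro a ha π hπ
  have hπa := mem_BRinv_iff.1 (intrinsicInterior_subset hπ)
  refine Set.eq_singleton_iff_unique_mem.2 ⟨hπa.2, fun b hb => ?_⟩
  by_contra hba
  exact hnr.not_BRinv_subset ha ⟨π, hπa.1, hb⟩ hba (BRinv_subset_BRinv_of_mem_br hπ hb)

/-- Remark 5, implication (ii): in the relative interior of `BR⁻¹(a)`, only `a` is optimal. -/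
theorem br_singleton_on_relint {Ω A : Type*} [Fintype Ω] [Nonempty Ω] [Fintype A] [Nonempty A]
    (u v : A → Ω → ℝ) (hnr : NoRedundantDM v) :
    ∀ a ∈ Ahat v, ∀ π ∈ intrinsicInterior ℝ (BRinv v a), br v π = {a} :=
  br_singleton_on_relint_general v hnr
end

section
/- [Claim 3 in the proof of Lemma 2] Assume there are no redundant actions for the decision-maker and no redundant actions for the experts, and that ū is concave on Δ(Ω) (i.e., ū(t·π + (1−t)·π') ≥ t·ū(π) + (1−t)·ū(π') for all π, π' ∈ Δ(Ω) and t ∈ [0,1]). Let a ∈ Â and let π belong to the intrinsic (relative) interior of BR⁻¹(a) := {π ∈ Δ(Ω) : v(a,π) = v̄(π)}. Then δ_a is the unique minimizer of α ↦ u(α,π) over Δ(Â): u(α, π) > u(a, π) for every α ∈ Δ(Â) with α ≠ δ_a. -/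
open Finset

variable {Ω A : Type*}

/-!
By the absence of redundant actions for the decision-maker, as soon as `Â` has two elements each
of them is the strict best reply at some belief. A linear functional that is nonnegative on
`BR⁻¹(a)` and vanishes at a relative interior point vanishes on all of it, so `a` is then the
strict best reply at `π`. Let `b ≠ a` in `Â` be the strict best reply at `ρ`. On the segment from
`π` to `ρ` the concave function `ū` coincides with the affine function `u(a, ·)` near `π` and with
`u(b, ·)` near `ρ`, which forces `u(a, π) ≤ u(b, π)`; equality would make `u(a, ·)` and `u(b, ·)`
agree at every such `ρ`. Those beliefs form a nonempty relatively open subset of the simplex, so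
`u(a, ·) = u(b, ·)` would follow, against the absence of redundant actions for the experts.
Averaging `u(a, π) < u(b, π)` over the support of `α` gives the claim.
-/

open AffineMap

section Concave

variable {I : Set ℝ} {f : ℝ → ℝ} {x y z : ℝ}

theorem ConcaveOn.le_affineMap_of_le_of_lt (hf : ConcaveOn ℝ I f) (g : ℝ →ᵃ[ℝ] ℝ)
    (hz : z ∈ I) (hy : y ∈ I) (hzx : z ≤ x) (hxy : x < y) (hgx : f x = g x) (hgy : f y = g y) :
    f z ≤ g z := by
  have hφ := hf.sub (((convexOn_id convex_univ).comp_affineMap g).subset (Set.subset_univ _) hf.1)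
  have := hφ.left_le_of_le_right'' hz hy hzx hxy (by simp [hgx, hgy])
  simpa [hgx] using this

theorem ConcaveOn.le_affineMap_of_lt_of_le (hf : ConcaveOn ℝ I f) (g : ℝ →ᵃ[ℝ] ℝ)
    (hx : x ∈ I) (hz : z ∈ I) (hxy : x < y) (hyz : y ≤ z) (hgx : f x = g x) (hgy : f y = g y) :
    f z ≤ g z := by
  have hφ := hf.sub (((convexOn_id convex_univ).comp_affineMap g).subset (Set.subset_univ _) hf.1)
  have := hφ.right_le_of_le_left'' hx hz hxy hyz (by simp [hgx, hgy])
  simpa [hgy] using this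

theorem ConcaveOn.le_and_eq_of_eq_lineMap (hf : ConcaveOn ℝ (Set.Icc 0 1) f)
    {s t A₀ A₁ B₀ B₁ : ℝ} (hs : 0 < s) (hst : s < t) (ht : t < 1)
    (hf0 : f 0 = A₀) (hfs : f s = lineMap A₀ A₁ s) (hft : f t = lineMap B₀ B₁ t) (hf1 : f 1 = B₁) :
    A₀ ≤ B₀ ∧ (A₀ = B₀ → A₁ = B₁) := by
  have mem : ∀ r : ℝ, 0 ≤ r → r ≤ 1 → r ∈ Set.Icc (0 : ℝ) 1 := fun r h₀ h₁ => ⟨h₀, h₁⟩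
  have h0 := mem 0 le_rfl zero_le_one
  have h1 := mem 1 zero_le_one le_rfl
  have hf0' : f 0 = lineMap A₀ A₁ (0 : ℝ) := by simpa using hf0
  have hf1' : f 1 = lineMap B₀ B₁ (1 : ℝ) := by simpa using hf1
  have hB0 := hf.le_affineMap_of_le_of_lt _ h0 h1 (hs.trans hst).le ht hft hf1'
  have hBs := hf.le_affineMap_of_le_of_lt _ (mem s hs.le (hst.trans ht).le) h1 hst.le ht hft hf1'
  have hA1 := hf.le_affineMap_of_lt_of_le _ h0 h1 hs (hst.trans ht).le hf0' hfs
  simp only [lineMap_apply_ring] at hB0 hBs hA1 hfs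
  refine ⟨by linarith, fun hAB => le_antisymm ?_ (by linarith)⟩
  subst hAB
  exact le_of_mul_le_mul_left (by linarith) hs

end Concave

lemma eq_single_of_mem_stdSimplex [Fintype A] [DecidableEq A] {α : A → ℝ} {b : A}
    (hα : α ∈ stdSimplex ℝ A) (h : ∀ c, c ≠ b → α c = 0) : α = Pi.single b 1 := by
  have hb : α b = 1 := by rw [← hα.2, Finset.sum_eq_single b (fun c _ => h c) (by simp)]
  funext c
  by_cases hc : c = b
  · subst hc; simp [hb]
  · simp [hc, h c hc]

lemma lt_sum_mul_of_ne_single [Fintype A] [DecidableEq A] {α : A → ℝ} {b : A}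
    (hα : α ∈ stdSimplex ℝ A) (hne : α ≠ Pi.single b 1) {f : A → ℝ}
    (hf : ∀ c, c ≠ b → α c ≠ 0 → f b < f c) :
    f b < ∑ c, α c * f c := by
  obtain ⟨c₀, hc₀b, hc₀⟩ : ∃ c, c ≠ b ∧ α c ≠ 0 := by
    by_contra! h
    exact hne (eq_single_of_mem_stdSimplex hα h)
  have hle : ∀ c ∈ Finset.univ, α c * f b ≤ α c * f c := by
    intro c _
    by_cases hc : c = b
    · rw [hc]
    by_cases hαc : α c = 0
    · simp [hαc]
    exact mul_le_mul_of_nonneg_left (hf c hc hαc).le (hα.1 c)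
  calc f b = ∑ c, α c * f b := by rw [← Finset.sum_mul, hα.2, one_mul]
    _ < ∑ c, α c * f c := Finset.sum_lt_sum hle ⟨c₀, Finset.mem_univ _,
        mul_lt_mul_of_pos_left (hf c₀ hc₀b hc₀) (lt_of_le_of_ne (hα.1 c₀) (Ne.symm hc₀))⟩

section Payoffs

variable [Fintype Ω]

lemma pay_eq_sum [Fintype A] (w : A → Ω → ℝ) (α : A → ℝ) (π : Ω → ℝ) :
    pay w α π = ∑ c, α c * payP w c π := by
  simp only [pay, payP, Finset.mul_sum]
  exact Finset.sum_congr rfl fun _ _ => Finset.sum_congr rfl fun _ _ => by ring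

lemma pay_single [Fintype A] [DecidableEq A] (w : A → Ω → ℝ) (b : A) (π : Ω → ℝ) :
    pay w (Pi.single b 1) π = payP w b π := by
  simp [pay_eq_sum, Pi.single_apply]

lemma payP_single [DecidableEq Ω] (w : A → Ω → ℝ) (c : A) (ω : Ω) :
    payP w c (Pi.single ω 1) = w c ω := by
  simp [payP, Pi.single_apply]

lemma payP_lineMap (w : A → Ω → ℝ) (c : A) (x y : Ω → ℝ) (t : ℝ) :
    payP w c (lineMap x y t) = lineMap (payP w c x) (payP w c y) t := by
  simp only [payP, lineMap_apply_module, Pi.add_apply, Pi.smul_apply,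
    smul_eq_mul, Finset.mul_sum, ← Finset.sum_add_distrib]
  exact Finset.sum_congr rfl fun _ _ => by ring

lemma continuous_payP (w : A → Ω → ℝ) (c : A) : Continuous (payP w c) := by
  unfold payP; fun_prop

lemma payP_eq_vbar_iff [Fintype A] {v : A → Ω → ℝ} {b : A} {π : Ω → ℝ} :
    payP v b π = vbar v π ↔ b ∈ br v π := by
  have : Nonempty A := ⟨b⟩
  have hbdd : BddAbove (Set.range fun c => payP v c π) := (Set.finite_range _).bddAbove
  exact ⟨fun h c => h ▸ le_ciSup hbdd c, fun h => le_antisymm (le_ciSup hbdd b) (ciSup_le h)⟩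

end Payoffs

section StrictBestReply

variable [Fintype Ω]

def IsStrictBestReply (v : A → Ω → ℝ) (b : A) (π : Ω → ℝ) : Prop :=
  ∀ c, c ≠ b → payP v c π < payP v b π

variable {u v : A → Ω → ℝ} {b : A} {π : Ω → ℝ}

lemma IsStrictBestReply.mem_br (h : IsStrictBestReply v b π) : b ∈ br v π := by
  intro c
  by_cases hc : c = b
  · rw [hc]
  · exact (h c hc).le

lemma isOpen_setOf_isStrictBestReply [Finite A] (v : A → Ω → ℝ) (b : A) :
    IsOpen {π | IsStrictBestReply v b π} := by
  simp only [IsStrictBestReply, Set.ofPred_forall]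
  exact isOpen_iInter_of_finite fun c => isOpen_iInter_of_finite fun _ =>
    isOpen_lt (continuous_payP v c) (continuous_payP v b)

lemma IsStrictBestReply.eventually_lineMap [Finite A] {x y : Ω → ℝ} {t₀ : ℝ}
    (h : IsStrictBestReply v b (lineMap x y t₀)) :
    ∀ᶠ t in nhds t₀, IsStrictBestReply v b (lineMap x y t) :=
  lineMap_continuous.continuousAt.preimage_mem_nhds
    ((isOpen_setOf_isStrictBestReply v b).mem_nhds h)

lemma IsStrictBestReply.BR_eq [Fintype A] [DecidableEq A] (h : IsStrictBestReply v b π) :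
    BR v π = {Pi.single b 1} := by
  have hlt : ∀ α ∈ stdSimplex ℝ A, α ≠ Pi.single b 1 → pay v α π < pay v (Pi.single b 1) π := by
    intro α hα hne
    have := lt_sum_mul_of_ne_single hα hne (f := fun c => -payP v c π)
      fun c hc _ => neg_lt_neg (h c hc)
    rw [pay_single, pay_eq_sum]
    simpa using this
  ext α
  constructor
  · rintro ⟨hα, hopt⟩
    by_contra hne
    exact (hlt α hα hne).not_ge (hopt _ (single_mem_stdSimplex ℝ b))
  · rintro rfl
    refine ⟨single_mem_stdSimplex ℝ b, fun α hα => ?_⟩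
    by_cases hne : α = Pi.single b 1
    · rw [hne]
    · exact (hlt α hα hne).le

lemma IsStrictBestReply.ubar_eq [Fintype A] (h : IsStrictBestReply v b π) :
    ubar u v π = payP u b π := by
  classical
  rw [ubar, h.BR_eq, Set.image_singleton, csSup_singleton, pay_single]

end StrictBestReply

theorem eventually_lineMap_mem_of_mem_intrinsicInterior {E : Type*} [AddCommGroup E]
    [Module ℝ E] [TopologicalSpace E] [IsTopologicalAddGroup E] [ContinuousSMul ℝ E]
    {s : Set E} {p x : E} (hp : p ∈ intrinsicInterior ℝ s) (hx : x ∈ s) :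
    ∀ᶠ t in nhds (0 : ℝ), lineMap p x t ∈ s := by
  obtain ⟨q, hq, rfl⟩ := mem_intrinsicInterior.1 hp
  let γ : ℝ → affineSpan ℝ s := fun t =>
    ⟨lineMap (q : E) x t, AffineMap.lineMap_mem t q.2 (subset_affineSpan ℝ s hx)⟩
  have hγ : Continuous γ := lineMap_continuous.subtype_mk _
  have hγ0 : γ 0 = q := Subtype.ext (lineMap_apply_zero _ _)
  exact hγ.continuousAt.preimage_mem_nhds (mem_interior_iff_mem_nhds.1 (hγ0.symm ▸ hq))

section Claim

variable [Fintype Ω] [Fintype A] {u v : A → Ω → ℝ} {a b : A}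

lemma exists_isStrictBestReply (hv : NoRedundantDM v) (ha : a ∈ Ahat v) (hb : b ∈ Ahat v)
    (hab : a ≠ b) : ∃ ρ ∈ stdSimplex ℝ Ω, IsStrictBestReply v b ρ := by
  obtain ⟨ρ, hρ, hlt⟩ := hv (Ahat v \ {b}) ⟨a, ha, hab⟩ ⟨Set.sdiff_subset, fun h => (h hb).2 rfl⟩
  have : Nonempty A := ⟨a⟩
  obtain ⟨m, hm⟩ := Finite.exists_max (payP v · ρ)
  have hvm : payP v m ρ = vbar v ρ := payP_eq_vbar_iff.2 hm
  obtain rfl : m = b := by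
    by_contra hmb
    exact (hlt m ⟨⟨ρ, hρ, hm⟩, hmb⟩).ne hvm
  refine ⟨ρ, hρ, fun c hc => ?_⟩
  by_cases hcA : c ∈ Ahat v
  · exact hvm ▸ hlt c ⟨hcA, hc⟩
  · obtain ⟨c', hc'⟩ : ∃ c', payP v c ρ < payP v c' ρ := by
      simpa [br] using fun h => hcA ⟨ρ, hρ, h⟩
    exact hc'.trans_le (hm c')

lemma isStrictBestReply_of_mem_intrinsicInterior {σ π : Ω → ℝ} (hσ : σ ∈ BRinv v a)
    (hσa : IsStrictBestReply v a σ) (hπ : π ∈ intrinsicInterior ℝ (BRinv v a)) :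
    IsStrictBestReply v a π := by
  intro c hc
  have hle : payP v c π ≤ payP v a π := payP_eq_vbar_iff.1 (intrinsicInterior_subset hπ).2 c
  refine hle.lt_of_ne fun heq => ?_
  obtain ⟨t, ht, htneg⟩ := ((eventually_lineMap_mem_of_mem_intrinsicInterior hπ hσ).filter_mono
    nhdsWithin_le_nhds |>.and (self_mem_nhdsWithin (s := Set.Iio 0))).exists
  have hz := payP_eq_vbar_iff.1 ht.2 c
  simp only [payP_lineMap, lineMap_apply_ring, heq] at hz
  have : t * payP v c σ ≤ t * payP v a σ := by linarith
  exact (hσa c hc).not_ge ((mul_le_mul_left_of_neg htneg).1 this)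

lemma UbarConcave.concaveOn (h : UbarConcave u v) : ConcaveOn ℝ (stdSimplex ℝ Ω) (ubar u v) := by
  refine ⟨convex_stdSimplex ℝ Ω, fun x hx y hy s t hs ht hst => ?_⟩
  obtain rfl : t = 1 - s := by linarith
  exact h x hx y hy s ⟨hs, by linarith⟩

lemma payP_le_and_eq_of_isStrictBestReply (hconc : ConcaveOn ℝ (stdSimplex ℝ Ω) (ubar u v))
    {x y : Ω → ℝ} (hx : x ∈ stdSimplex ℝ Ω) (hxa : IsStrictBestReply v a x)
    (hy : y ∈ stdSimplex ℝ Ω) (hyb : IsStrictBestReply v b y) :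
    payP u a x ≤ payP u b x ∧ (payP u a x = payP u b x → payP u a y = payP u b y) := by
  have hf : ConcaveOn ℝ (Set.Icc (0 : ℝ) 1) fun r => ubar u v (lineMap x y r) :=
    (hconc.comp_affineMap (lineMap x y)).subset
      (fun r hr => (convex_stdSimplex ℝ Ω).lineMap_mem hx hy hr) (convex_Icc 0 1)
  have hx' : IsStrictBestReply v a (lineMap x y (0 : ℝ)) := by rwa [lineMap_apply_zero]
  have hy' : IsStrictBestReply v b (lineMap x y (1 : ℝ)) := by rwa [lineMap_apply_one]
  obtain ⟨s, hsa, hs⟩ := (hx'.eventually_lineMap.filter_mono nhdsWithin_le_nhds |>.and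
    (Ioo_mem_nhdsGT (show (0 : ℝ) < 1 / 2 by norm_num))).exists
  obtain ⟨t, htb, ht⟩ := (hy'.eventually_lineMap.filter_mono nhdsWithin_le_nhds |>.and
    (Ioo_mem_nhdsLT (show (1 / 2 : ℝ) < 1 by norm_num))).exists
  have hpiece : ∀ {c : A} {r : ℝ}, IsStrictBestReply v c (lineMap x y r) →
      ubar u v (lineMap x y r) = lineMap (payP u c x) (payP u c y) r :=
    fun h => h.ubar_eq.trans (payP_lineMap u _ x y _)
  exact hf.le_and_eq_of_eq_lineMap hs.1 (hs.2.trans ht.1) ht.2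
    (by simpa using hpiece hx') (hpiece hsa) (hpiece htb) (by simpa using hpiece hy')

lemma funext_of_payP_eq_on_isStrictBestReply [DecidableEq Ω] {w : A → Ω → ℝ} {c d : A}
    {ρ : Ω → ℝ} (hρ : ρ ∈ stdSimplex ℝ Ω) (hρb : IsStrictBestReply v b ρ)
    (h : ∀ z ∈ stdSimplex ℝ Ω, IsStrictBestReply v b z → payP w c z = payP w d z) :
    w c = w d := by
  funext ω
  have hρ' : IsStrictBestReply v b (lineMap ρ (Pi.single ω 1) (0 : ℝ)) := by
    rwa [lineMap_apply_zero]
  obtain ⟨t, htb, ht⟩ := (hρ'.eventually_lineMap.filter_mono nhdsWithin_le_nhds |>.and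
    (Ioo_mem_nhdsGT zero_lt_one)).exists
  have hz := h _ ((convex_stdSimplex ℝ Ω).lineMap_mem hρ (single_mem_stdSimplex ℝ ω)
    ⟨ht.1.le, ht.2.le⟩) htb
  simp only [payP_lineMap, lineMap_apply_ring', h ρ hρ hρb, payP_single] at hz
  exact sub_left_injective (mul_left_cancel₀ ht.1.ne' (add_right_cancel hz))

lemma payP_lt_payP_of_mem_intrinsicInterior (hv : NoRedundantDM v) (hu : NoRedundantExperts u)
    (hconc : UbarConcave u v) (ha : a ∈ Ahat v) (hb : b ∈ Ahat v) (hba : b ≠ a) {π : Ω → ℝ}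
    (hπ : π ∈ intrinsicInterior ℝ (BRinv v a)) :
    payP u a π < payP u b π := by
  classical
  obtain ⟨σ, hσ, hσa⟩ := exists_isStrictBestReply hv hb ha hba
  have hπa := isStrictBestReply_of_mem_intrinsicInterior ⟨hσ, payP_eq_vbar_iff.2 hσa.mem_br⟩
    hσa hπ
  have hcmp : ∀ ρ ∈ stdSimplex ℝ Ω, IsStrictBestReply v b ρ →
      payP u a π ≤ payP u b π ∧ (payP u a π = payP u b π → payP u a ρ = payP u b ρ) :=
    fun ρ hρ hρb => payP_le_and_eq_of_isStrictBestReply hconc.concaveOn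
      (intrinsicInterior_subset hπ).1 hπa hρ hρb
  obtain ⟨ρ, hρ, hρb⟩ := exists_isStrictBestReply hv ha hb hba.symm
  refine (hcmp ρ hρ hρb).1.lt_of_ne fun heq => ?_
  obtain ⟨ω, hω⟩ := hu a b hba.symm
  exact hω (congrFun (funext_of_payP_eq_on_isStrictBestReply hρ hρb
    fun z hz hzb => (hcmp z hz hzb).2 heq) ω)

end Claim

theorem unique_minimizer_relint_general {Ω A : Type*} [Fintype Ω] [Fintype A]
    [DecidableEq A] (u v : A → Ω → ℝ)
    (hnrDM : NoRedundantDM v) (hnrE : NoRedundantExperts u) (hconc : UbarConcave u v)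
    (a : A) (ha : a ∈ Ahat v)
    (π : Ω → ℝ) (hπ : π ∈ intrinsicInterior ℝ (BRinv v a)) :
    ∀ α ∈ simplexOn (Ahat v), α ≠ (fun a' => if a' = a then (1 : ℝ) else 0) →
      payP u a π < pay u α π := by
  rintro α ⟨hα, hsupp⟩ hne
  have hsingle : (fun a' => if a' = a then (1 : ℝ) else 0) = Pi.single a 1 :=
    funext fun _ => (Pi.single_apply _ _ _).symm
  rw [pay_eq_sum]
  refine lt_sum_mul_of_ne_single (f := (payP u · π)) hα (hsingle ▸ hne) fun c hca hc => ?_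
  exact payP_lt_payP_of_mem_intrinsicInterior hnrDM hnrE hconc ha
    (not_imp_comm.1 (hsupp c) hc) hca hπ

/-- Claim 3 in the proof of Lemma 2: `δ_a` is the unique minimizer of `u(·, π)` over `Δ(Â)`. -/
theorem unique_minimizer_relint {Ω A : Type*} [Fintype Ω] [Nonempty Ω] [Fintype A] [Nonempty A]
    [DecidableEq A] (u v : A → Ω → ℝ)
    (hnrDM : NoRedundantDM v) (hnrE : NoRedundantExperts u) (hconc : UbarConcave u v)
    (a : A) (ha : a ∈ Ahat v)
    (π : Ω → ℝ) (hπ : π ∈ intrinsicInterior ℝ (BRinv v a)) :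
    ∀ α ∈ simplexOn (Ahat v), α ≠ (fun a' => if a' = a then (1 : ℝ) else 0) →
      payP u a π < pay u α π :=
  unique_minimizer_relint_general u v hnrDM hnrE hconc a ha π hπ
end
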